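/- Under the stated assumptions on the degenerate diffusion coefficient a, the embedding of the weighted Sobolev space H¹_a(Ω) into L²(Ω) is compact; in particular there exists a constant C > 0 such that ‖y‖_{L²(Ω)} ≤ C‖y‖_{H¹_a(Ω)} for every y ∈ H¹_a(Ω). -/

import Mathlib

open MeasureTheory Real Set Filter Classical

noncomputable section

namespace DegenerateControl

/-- The spatial domain `Ω = (-1, 1)`. -/
def Omg : Set ℝ := Set.Ioo (-1 : ℝ) 1

/-- Lebesgue measure restricted to `Ω`. -/
def muO : Measure ℝ := volume.restrict Omg

/-- Lebesgue measure restricted to the time interval `(0, T)`. -/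
def muT (T : ℝ) : Measure ℝ := volume.restrict (Set.Ioc 0 T)

/-- Product measure on `Q = (0,T) × Ω`. -/
def muQ (T : ℝ) : Measure (ℝ × ℝ) := (muT T).prod muO

/-- Product measure on `ω_T = (0,T) × ω`. -/
def muW (T : ℝ) (w : Set ℝ) : Measure (ℝ × ℝ) := (muT T).prod (volume.restrict w)

/-- The zero function of two variables. -/
def zf : ℝ → ℝ → ℝ := fun _ _ => 0

/-- The zero function of one variable. -/
def zO : ℝ → ℝ := fun _ => 0

/-- Assumption 1.1 on the degenerate diffusion coefficient `a`:
`a ∈ C¹([-1,1])`, `a > 0` in `(-1,1)`, `a(±1) = 0`, and `x ↦ ∫₀ˣ ds / a(s)`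
belongs to `L¹(-1,1)`. -/
structure DiffCoeff (a : ℝ → ℝ) : Prop where
  contDiff : ContDiffOn ℝ 1 a (Set.Icc (-1 : ℝ) 1)
  pos : ∀ x ∈ Omg, 0 < a x
  zero_left : a (-1) = 0
  zero_right : a 1 = 0
  int_inv : IntegrableOn (fun x => ∫ s in (0 : ℝ)..x, 1 / a s) Omg

/-- `u` is locally absolutely continuous on `Ω`: on every pair of points of `Ω`,
`u` is the integral of its derivative. -/
def LocAbsCont (u : ℝ → ℝ) : Prop :=
  ∀ c ∈ Omg, ∀ x ∈ Omg,
    IntervalIntegrable (deriv u) volume c x ∧ u x = u c + ∫ s in c..x, deriv u s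

/-- Membership in the weighted Sobolev space `H¹_a(Ω)`. -/
def MemH1a (a : ℝ → ℝ) (u : ℝ → ℝ) : Prop :=
  MemLp u 2 muO ∧ LocAbsCont u ∧
    MemLp (fun x => Real.sqrt (a x) * deriv u x) 2 muO

/-- The squared `L²(Ω)` norm. -/
def L2sq (u : ℝ → ℝ) : ℝ := ∫ x, (u x) ^ 2 ∂muO

/-- The `L²(Ω)` norm. -/
def L2norm (u : ℝ → ℝ) : ℝ := Real.sqrt (L2sq u)

/-- The squared `H¹_a(Ω)` norm: `‖u‖² = ‖u‖²_{L²} + ‖√a u_x‖²_{L²}`. -/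
def H1aSq (a u : ℝ → ℝ) : ℝ := L2sq u + ∫ x, a x * (deriv u x) ^ 2 ∂muO

/-- The `H¹_a(Ω)` norm. -/
def H1aNorm (a u : ℝ → ℝ) : ℝ := Real.sqrt (H1aSq a u)

/-- The dual norm of a functional `F` on `H¹_a(Ω)`. -/
def dualNorm (a : ℝ → ℝ) (F : (ℝ → ℝ) → ℝ) : ℝ :=
  sSup {r : ℝ | ∃ φ, MemH1a a φ ∧ H1aNorm a φ ≤ 1 ∧ r = F φ}

/-- Membership `F ∈ L²(0,T;(H¹_a(Ω))')`: for (a.e.) `t`, `F t` is a bounded linear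
functional on `H¹_a(Ω)`, and its dual norm is square integrable in time. -/
def MemL2Dual (a : ℝ → ℝ) (T : ℝ) (F : ℝ → (ℝ → ℝ) → ℝ) : Prop :=
  (∀ t, ∀ φ ψ : ℝ → ℝ, MemH1a a φ → MemH1a a ψ → F t (φ + ψ) = F t φ + F t ψ) ∧
  (∀ t, ∀ (c : ℝ) (φ : ℝ → ℝ), MemH1a a φ → F t (c • φ) = c * F t φ) ∧
  (∀ t, ∀ φ : ℝ → ℝ, MemH1a a φ → |F t φ| ≤ dualNorm a (F t) * H1aNorm a φ) ∧
  Integrable (fun t => (dualNorm a (F t)) ^ 2) (muT T)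

/-- The `L²(0,T;(H¹_a(Ω))')` norm. -/
def L2DualNorm (a : ℝ → ℝ) (T : ℝ) (F : ℝ → (ℝ → ℝ) → ℝ) : ℝ :=
  Real.sqrt (∫ t, (dualNorm a (F t)) ^ 2 ∂muT T)

/-- The space `H(Q)` of test functions: `φ ∈ L²(0,T;H¹_a(Ω))`,
`φ_t ∈ L²(Q)` and `φ(T,·) = 0`. -/
structure TestFun (a : ℝ → ℝ) (T : ℝ) (φ : ℝ → ℝ → ℝ) : Prop where
  memH1a : ∀ t ∈ Set.Icc 0 T, MemH1a a (φ t)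
  sqInt : Integrable (fun t => H1aSq a (φ t)) (muT T)
  timeDeriv : MemLp (fun q : ℝ × ℝ => deriv (fun s => φ s q.2) q.1) 2 (muQ T)
  measQ : AEStronglyMeasurable (Function.uncurry φ) (muQ T)
  final : ∀ x ∈ Omg, φ T x = 0

/-- Membership in `W_a(0,T)`: `p ∈ L²(0,T;H¹_a(Ω))` and the distributional time
derivative of `p` is represented by a family of functionals belonging to
`L²(0,T;(H¹_a(Ω))')`; in particular `p ∈ C([0,T];L²(Ω))`. -/
structure MemWa (a : ℝ → ℝ) (T : ℝ) (p : ℝ → ℝ → ℝ) : Prop where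
  measQ : AEStronglyMeasurable (Function.uncurry p) (muQ T)
  memH1a : ∀ᵐ t ∂muT T, MemH1a a (p t)
  sqInt : Integrable (fun t => H1aSq a (p t)) (muT T)
  contL2 : ∀ t ∈ Set.Icc 0 T,
    Tendsto (fun s => L2norm (fun x => p s x - p t x)) (nhdsWithin t (Set.Icc 0 T)) (nhds 0)
  timeDerivDual : ∃ F : ℝ → (ℝ → ℝ) → ℝ,
    Integrable (fun t => (dualNorm a (F t)) ^ 2) (muT T) ∧
    ∀ φ : ℝ → ℝ → ℝ, TestFun a T φ →
      -(∫ q : ℝ × ℝ, deriv (fun s => φ s q.2) q.1 * p q.1 q.2 ∂muQ T)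
        = (∫ t, F t (φ t) ∂muT T) + ∫ x, p 0 x * φ 0 x ∂muO

/-- Weak solution of `p_t - (a(x) p_x)_x = (v p + g) χ_ω + f` in `Q`,
`a p_x = 0` on the lateral boundary, `p(0,·) = p0`, in the sense of
the variational identity of Definition 2.3. -/
def IsWeakSol (a : ℝ → ℝ) (T : ℝ) (ω : Set ℝ) (v g f : ℝ → ℝ → ℝ)
    (p0 : ℝ → ℝ) (p : ℝ → ℝ → ℝ) : Prop :=
  MemWa a T p ∧
  ∀ φ : ℝ → ℝ → ℝ, TestFun a T φ →
    -(∫ q : ℝ × ℝ, deriv (fun s => φ s q.2) q.1 * p q.1 q.2 ∂muQ T)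
      + (∫ q : ℝ × ℝ, a q.2 * deriv (p q.1) q.2 * deriv (φ q.1) q.2 ∂muQ T)
      - (∫ q : ℝ × ℝ, v q.1 q.2 * p q.1 q.2 * φ q.1 q.2 ∂muW T ω)
      = (∫ x, p0 x * φ 0 x ∂muO)
        + (∫ q : ℝ × ℝ, g q.1 q.2 * φ q.1 q.2 ∂muW T ω)
        + (∫ q : ℝ × ℝ, f q.1 q.2 * φ q.1 q.2 ∂muQ T)

/-- Weak solution of `p_t - (a(x) p_x)_x = v χ_ω p + f` with a source
`f ∈ L²(0,T;(H¹_a(Ω))')` represented by the family of functionals `F`. -/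
def IsWeakSolD (a : ℝ → ℝ) (T : ℝ) (ω : Set ℝ) (v : ℝ → ℝ → ℝ)
    (F : ℝ → (ℝ → ℝ) → ℝ) (p0 : ℝ → ℝ) (p : ℝ → ℝ → ℝ) : Prop :=
  MemWa a T p ∧
  ∀ φ : ℝ → ℝ → ℝ, TestFun a T φ →
    -(∫ q : ℝ × ℝ, deriv (fun s => φ s q.2) q.1 * p q.1 q.2 ∂muQ T)
      + (∫ q : ℝ × ℝ, a q.2 * deriv (p q.1) q.2 * deriv (φ q.1) q.2 ∂muQ T)
      - (∫ q : ℝ × ℝ, v q.1 q.2 * p q.1 q.2 * φ q.1 q.2 ∂muW T ω)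
      = (∫ x, p0 x * φ 0 x ∂muO) + ∫ t, F t (φ t) ∂muT T

/-- The `C([0,T];L²(Ω))` norm. -/
def normC (T : ℝ) (p : ℝ → ℝ → ℝ) : ℝ :=
  sSup ((fun t => L2norm (p t)) '' Set.Icc 0 T)

/-- The `L²(0,T;H¹_a(Ω))` norm. -/
def normL2H1a (a : ℝ → ℝ) (T : ℝ) (p : ℝ → ℝ → ℝ) : ℝ :=
  Real.sqrt (∫ t, H1aSq a (p t) ∂muT T)

/-- The `L^∞(ω_T)` norm. -/
def LinfW (T : ℝ) (ω : Set ℝ) (v : ℝ → ℝ → ℝ) : ℝ :=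
  (eLpNorm (Function.uncurry v) ⊤ (muW T ω)).toReal

/-- The `L^∞(Q)` norm. -/
def LinfQ (T : ℝ) (f : ℝ → ℝ → ℝ) : ℝ :=
  (eLpNorm (Function.uncurry f) ⊤ (muQ T)).toReal

/-- The `L^∞(Ω)` norm. -/
def LinfO (g : ℝ → ℝ) : ℝ := (eLpNorm g ⊤ muO).toReal

/-- The `L²(ω_T)` norm. -/
def L2W (T : ℝ) (ω : Set ℝ) (v : ℝ → ℝ → ℝ) : ℝ :=
  Real.sqrt (∫ q : ℝ × ℝ, (v q.1 q.2) ^ 2 ∂muW T ω)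

/-- `v ∈ L^∞(ω_T)`. -/
def MemLinfW (T : ℝ) (ω : Set ℝ) (v : ℝ → ℝ → ℝ) : Prop :=
  MemLp (Function.uncurry v) ⊤ (muW T ω)

/-- `f ∈ L^∞(Q)`. -/
def MemLinfQ (T : ℝ) (f : ℝ → ℝ → ℝ) : Prop :=
  MemLp (Function.uncurry f) ⊤ (muQ T)

/-- `g ∈ L^∞(Ω)`. -/
def MemLinfO (g : ℝ → ℝ) : Prop := MemLp g ⊤ muO

/-- `v ∈ L²(ω_T)`. -/
def MemL2W (T : ℝ) (ω : Set ℝ) (v : ℝ → ℝ → ℝ) : Prop :=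
  MemLp (Function.uncurry v) 2 (muW T ω)

/-- The control-to-state map `G`, obtained by choosing, for each control `v`,
a weak solution of the bilinear state equation (when one exists). -/
def Gmap (a : ℝ → ℝ) (T : ℝ) (ω : Set ℝ) (y0 : ℝ → ℝ) (v : ℝ → ℝ → ℝ) : ℝ → ℝ → ℝ :=
  if h : ∃ y, IsWeakSol a T ω v zf zf y0 y then Classical.choose h else zf

/-- `q` is the adjoint state associated to the control `u`:
after the change of variable `t ↦ T - t`, it solves the forward problem
with control `u(T-·)` and initial datum `G(u)(T,·) - y^d`. -/
def IsAdjointSol (a : ℝ → ℝ) (T : ℝ) (ω : Set ℝ) (y0 yd : ℝ → ℝ)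
    (u q : ℝ → ℝ → ℝ) : Prop :=
  IsWeakSol a T ω (fun t x => u (T - t) x) zf zf
    (fun x => Gmap a T ω y0 u T x - yd x) (fun t x => q (T - t) x)

/-- The adjoint state map, obtained by choice. -/
def Qmap (a : ℝ → ℝ) (T : ℝ) (ω : Set ℝ) (y0 yd : ℝ → ℝ)
    (u : ℝ → ℝ → ℝ) : ℝ → ℝ → ℝ :=
  if h : ∃ q, IsAdjointSol a T ω y0 yd u q then Classical.choose h else zf

/-- `ρ` solves the linearized state equation at `u` in the direction `w`:
`ρ_t - (a ρ_x)_x = (u ρ + w G(u)) χ_ω`, `ρ(0,·) = 0`. -/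
def IsLinSol (a : ℝ → ℝ) (T : ℝ) (ω : Set ℝ) (y0 : ℝ → ℝ)
    (u w ρ : ℝ → ℝ → ℝ) : Prop :=
  IsWeakSol a T ω u (fun t x => w t x * Gmap a T ω y0 u t x) zf zO ρ

/-- The derivative `G'(u)w` of the control-to-state map, obtained by choice. -/
def Gprime (a : ℝ → ℝ) (T : ℝ) (ω : Set ℝ) (y0 : ℝ → ℝ)
    (u w : ℝ → ℝ → ℝ) : ℝ → ℝ → ℝ :=
  if h : ∃ ρ, IsLinSol a T ω y0 u w ρ then Classical.choose h else zf

/-- The cost functional `J(y,v) = ½‖y(T)-y^d‖²_{L²(Ω)} + (α/2)‖v‖²_{L²(ω_T)}`. -/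
def cost (α T : ℝ) (ω : Set ℝ) (yd : ℝ → ℝ) (y v : ℝ → ℝ → ℝ) : ℝ :=
  (1 / 2) * (∫ x, (y T x - yd x) ^ 2 ∂muO)
    + (α / 2) * ∫ q : ℝ × ℝ, (v q.1 q.2) ^ 2 ∂muW T ω

/-- The reduced cost functional `𝒥(v) = J(G(v),v)`. -/
def Jred (a : ℝ → ℝ) (α T : ℝ) (ω : Set ℝ) (y0 yd : ℝ → ℝ)
    (v : ℝ → ℝ → ℝ) : ℝ :=
  cost α T ω yd (Gmap a T ω y0 v) v

/-- The admissible set `U = {w ∈ L^∞(ω_T) : m ≤ w ≤ M}`. -/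
def InU (T : ℝ) (ω : Set ℝ) (m M : ℝ) (v : ℝ → ℝ → ℝ) : Prop :=
  MemLinfW T ω v ∧ ∀ᵐ q ∂muW T ω, v q.1 q.2 ∈ Set.Icc m M

/-- The first derivative of the reduced cost:
`𝒥'(u)v = ∫_{ω_T} (α u + G(u) q(u)) v`. -/
def Jprime (a : ℝ → ℝ) (α T : ℝ) (ω : Set ℝ) (y0 yd : ℝ → ℝ)
    (u v : ℝ → ℝ → ℝ) : ℝ :=
  ∫ q : ℝ × ℝ, (α * u q.1 q.2
    + Gmap a T ω y0 u q.1 q.2 * Qmap a T ω y0 yd u q.1 q.2) * v q.1 q.2 ∂muW T ω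

/-- The second derivative of the reduced cost:
`𝒥''(u)[w,h] = ∫_{ω_T} (h G'(u)w + w G'(u)h) q + ∫_Ω (G'(u)w)(T)(G'(u)h)(T) + α ∫_{ω_T} h w`. -/
def Jsecond (a : ℝ → ℝ) (α T : ℝ) (ω : Set ℝ) (y0 yd : ℝ → ℝ)
    (u w h : ℝ → ℝ → ℝ) : ℝ :=
  (∫ q : ℝ × ℝ, (h q.1 q.2 * Gprime a T ω y0 u w q.1 q.2
      + w q.1 q.2 * Gprime a T ω y0 u h q.1 q.2)
      * Qmap a T ω y0 yd u q.1 q.2 ∂muW T ω)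
    + (∫ x, Gprime a T ω y0 u w T x * Gprime a T ω y0 u h T x ∂muO)
    + α * ∫ q : ℝ × ℝ, h q.1 q.2 * w q.1 q.2 ∂muW T ω

/-- `u` is an `L^∞`-local solution of the optimal control problem. -/
def IsLocalMin (a : ℝ → ℝ) (α T : ℝ) (ω : Set ℝ) (y0 yd : ℝ → ℝ) (m M : ℝ)
    (u : ℝ → ℝ → ℝ) : Prop :=
  InU T ω m M u ∧ ∃ ε > 0, ∀ v, InU T ω m M v →
    LinfW T ω (fun t x => v t x - u t x) < ε →
    Jred a α T ω y0 yd u ≤ Jred a α T ω y0 yd v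

end DegenerateControl

/-!
Let `H(x) = ∫₀ˣ ds / a(s)` (`invPrimitive a`). Cauchy–Schwarz against the weight `a` gives
`|u(x) - u(c)| ≤ ‖u‖_{H¹_a} √|H(x) - H(c)|` on `Ω`. Anchoring this at a point of `(-1/2, 1/2)`
where `u² ≤ ‖u‖²_{L²}` yields `u(x)² ≤ ‖u‖²_{H¹_a} w(x)` with
`w = 2 (1 + |H(-1/2)| + |H(1/2)| + |H|)` (`H1aWeight a`), which is integrable by the hypothesis
on `a`. So a bounded sequence in `H¹_a(Ω)` is equicontinuous at every point of `Ω` (`H` is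
continuous there) and pointwise bounded; a subsequence converging at the rational points of `Ω`
therefore converges everywhere on `Ω`, and dominated convergence with the dominating function
`C² w` upgrades this to convergence in `L²(Ω)`.
-/

open Topology

theorem integral_mul_le_sqrt_mul_sqrt {α : Type*} [MeasurableSpace α] {μ : Measure α}
    {f g : α → ℝ} (hf : 0 ≤ᵐ[μ] f) (hg : 0 ≤ᵐ[μ] g) (hf2 : MemLp f 2 μ) (hg2 : MemLp g 2 μ) :
    ∫ x, f x * g x ∂μ ≤ √(∫ x, f x ^ 2 ∂μ) * √(∫ x, g x ^ 2 ∂μ) := by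
  have h := integral_mul_le_Lp_mul_Lq_of_nonneg Real.HolderConjugate.two_two hf hg
    (by simpa using hf2) (by simpa using hg2)
  simpa only [Real.rpow_two, ← Real.sqrt_eq_rpow] using h

theorem EquicontinuousAt.cauchySeq_of_mem_closure {ι X α : Type*} [Nonempty ι] [SemilatticeSup ι]
    [TopologicalSpace X] [PseudoMetricSpace α] {F : ι → X → α} {s : Set X} {x : X}
    (hF : EquicontinuousAt F x) (hs : ∀ y ∈ s, CauchySeq (F · y)) (hx : x ∈ closure s) :
    CauchySeq (F · x) := by
  rw [Metric.cauchySeq_iff']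
  intro ε hε
  obtain ⟨y, hyx, hys⟩ := mem_closure_iff_nhds.mp hx _
    (Metric.equicontinuousAt_iff_right.mp hF (ε / 3) (by positivity))
  obtain ⟨N, hN⟩ := Metric.cauchySeq_iff'.mp (hs y hys) (ε / 3) (by positivity)
  refine ⟨N, fun n hn => ?_⟩
  calc dist (F n x) (F N x)
      ≤ dist (F n x) (F n y) + dist (F n y) (F N y) + dist (F N y) (F N x) := dist_triangle4 _ _ _ _
    _ < ε / 3 + ε / 3 + ε / 3 := by
        gcongr
        · exact hyx n
        · exact hN n hn
        · rw [dist_comm]; exact hyx N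
    _ = ε := by ring

theorem exists_strictMono_tendsto_of_abs_le {D : Type*} [Countable D] (f : ℕ → D → ℝ)
    (B : D → ℝ) (hB : ∀ n d, |f n d| ≤ B d) :
    ∃ (y : D → ℝ) (k : ℕ → ℕ), StrictMono k ∧
      ∀ d, Tendsto (fun n => f (k n) d) atTop (𝓝 (y d)) := by
  have hK : IsCompact (univ.pi fun d => Icc (-B d) (B d)) :=
    isCompact_univ_pi fun _ => isCompact_Icc
  obtain ⟨y, -, k, hk, hlim⟩ := hK.tendsto_subseq (x := f) fun n =>
    mem_univ_pi.mpr fun d => abs_le.mp (hB n d)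
  exact ⟨y, k, hk, tendsto_pi_nhds.mp hlim⟩

theorem memLp_two_and_tendsto_integral_sq_sub_of_dominated {α : Type*} [MeasurableSpace α]
    {μ : Measure α} {f : ℕ → α → ℝ} {g G : α → ℝ} (hf : ∀ n, AEStronglyMeasurable (f n) μ)
    (hG : Integrable G μ) (hbound : ∀ n, ∀ᵐ x ∂μ, f n x ^ 2 ≤ G x)
    (hlim : ∀ᵐ x ∂μ, Tendsto (f · x) atTop (𝓝 (g x))) :
    MemLp g 2 μ ∧ Tendsto (fun n => ∫ x, (f n x - g x) ^ 2 ∂μ) atTop (𝓝 0) := by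
  have hg : AEStronglyMeasurable g μ := aestronglyMeasurable_of_tendsto_ae atTop hf hlim
  have hgG : ∀ᵐ x ∂μ, g x ^ 2 ≤ G x := by
    filter_upwards [ae_all_iff.mpr hbound, hlim] with x hfx hx
    exact le_of_tendsto' (hx.pow 2) hfx
  refine ⟨(memLp_two_iff_integrable_sq hg).mpr (hG.mono' (hg.pow 2) ?_), ?_⟩
  · filter_upwards [hgG] with x hx
    rwa [Real.norm_of_nonneg (sq_nonneg _)]
  · have hint := tendsto_integral_of_dominated_convergence (F := fun n x => (f n x - g x) ^ 2)
      (f := fun _ => 0) (fun x => 4 * G x)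
      (fun n => ((hf n).sub hg).pow 2) (hG.const_mul 4) (fun n => ?_) ?_
    · simpa using hint
    · filter_upwards [hbound n, hgG] with x hfx hgx
      rw [Real.norm_of_nonneg (sq_nonneg _)]
      nlinarith [sq_nonneg (f n x + g x)]
    · filter_upwards [hlim] with x hx
      simpa using (hx.sub_const (g x)).pow 2

namespace DegenerateControl

instance isFiniteMeasure_muO : IsFiniteMeasure muO := by
  unfold muO Omg; infer_instance

variable {a u : ℝ → ℝ} {c x : ℝ}

def invPrimitive (a : ℝ → ℝ) (x : ℝ) : ℝ := ∫ s in (0 : ℝ)..x, 1 / a s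

namespace DiffCoeff

theorem continuousOn_inv (ha : DiffCoeff a) : ContinuousOn (fun s => 1 / a s) Omg :=
  continuousOn_const.div (ha.contDiff.continuousOn.mono Ioo_subset_Icc_self)
    fun x hx => (ha.pos x hx).ne'

theorem intervalIntegrable_inv (ha : DiffCoeff a) (hc : c ∈ Omg) (hx : x ∈ Omg) :
    IntervalIntegrable (fun s => 1 / a s) volume c x :=
  (ha.continuousOn_inv.mono (ordConnected_Ioo.uIcc_subset hc hx)).intervalIntegrable

theorem invPrimitive_sub (ha : DiffCoeff a) (hc : c ∈ Omg) (hx : x ∈ Omg) :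
    invPrimitive a x - invPrimitive a c = ∫ s in c..x, 1 / a s :=
  have h0 : (0 : ℝ) ∈ Omg := by norm_num [Omg]
  intervalIntegral.integral_interval_sub_left (ha.intervalIntegrable_inv h0 hx)
    (ha.intervalIntegrable_inv h0 hc)

theorem monotoneOn_invPrimitive (ha : DiffCoeff a) : MonotoneOn (invPrimitive a) Omg := by
  intro c hc x hx hcx
  rw [← sub_nonneg, ha.invPrimitive_sub hc hx]
  exact intervalIntegral.integral_nonneg hcx fun s hs =>
    (one_div_pos.mpr (ha.pos s (ordConnected_Ioo.out hc hx hs))).le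

theorem continuousAt_invPrimitive (ha : DiffCoeff a) (hx : x ∈ Omg) :
    ContinuousAt (invPrimitive a) x :=
  have h0 : (0 : ℝ) ∈ Omg := by norm_num [Omg]
  (intervalIntegral.integral_hasDerivAt_right (ha.intervalIntegrable_inv h0 hx)
    (ha.continuousOn_inv.stronglyMeasurableAtFilter isOpen_Ioo x hx)
    (ha.continuousOn_inv.continuousAt (isOpen_Ioo.mem_nhds hx))).continuousAt

theorem abs_invPrimitive_le (ha : DiffCoeff a) (hx : x ∈ Icc (-(1 / 2) : ℝ) (1 / 2)) :
    |invPrimitive a x| ≤ |invPrimitive a (-(1 / 2))| + |invPrimitive a (1 / 2)| := by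
  have hΩ : ∀ y ∈ Icc (-(1 / 2) : ℝ) (1 / 2), y ∈ Omg := fun y hy =>
    ⟨by linarith [hy.1], by linarith [hy.2]⟩
  have hlo := ha.monotoneOn_invPrimitive (hΩ _ (by norm_num)) (hΩ x hx) hx.1
  have hhi := ha.monotoneOn_invPrimitive (hΩ x hx) (hΩ _ (by norm_num)) hx.2
  rw [abs_le]
  constructor <;> linarith [neg_abs_le (invPrimitive a (-(1 / 2))),
    le_abs_self (invPrimitive a (1 / 2)), abs_nonneg (invPrimitive a (-(1 / 2))),
    abs_nonneg (invPrimitive a (1 / 2))]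

theorem integral_energy_nonneg (ha : DiffCoeff a) (u : ℝ → ℝ) :
    0 ≤ ∫ x, a x * deriv u x ^ 2 ∂muO :=
  integral_nonneg_of_ae <| (ae_restrict_mem measurableSet_Ioo).mono fun x hx =>
    mul_nonneg (ha.pos x hx).le (sq_nonneg _)

theorem L2sq_le_H1aSq (ha : DiffCoeff a) (u : ℝ → ℝ) : L2sq u ≤ H1aSq a u :=
  le_add_of_nonneg_right (ha.integral_energy_nonneg u)

theorem H1aSq_nonneg (ha : DiffCoeff a) (u : ℝ → ℝ) : 0 ≤ H1aSq a u :=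
  add_nonneg (integral_nonneg fun _ => sq_nonneg _) (ha.integral_energy_nonneg u)

theorem L2norm_le_H1aNorm (ha : DiffCoeff a) (u : ℝ → ℝ) : L2norm u ≤ H1aNorm a u :=
  Real.sqrt_le_sqrt (ha.L2sq_le_H1aSq u)

end DiffCoeff

namespace MemH1a

theorem abs_sub_le_of_le (ha : DiffCoeff a) (hu : MemH1a a u) (hc : c ∈ Omg) (hx : x ∈ Omg)
    (hcx : c ≤ x) :
    |u x - u c| ≤ H1aNorm a u * √(invPrimitive a x - invPrimitive a c) := by
  have hS : Ioc c x ⊆ Omg := Ioc_subset_Icc_self.trans (ordConnected_Ioo.out hc hx)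
  set f : ℝ → ℝ := fun s => ‖√(a s) * deriv u s‖
  set g : ℝ → ℝ := fun s => (√(a s))⁻¹
  have hf_sq : ∀ s ∈ Omg, f s ^ 2 = a s * deriv u s ^ 2 := fun s hs => by
    simp only [f, Real.norm_eq_abs, sq_abs, mul_pow, Real.sq_sqrt (ha.pos s hs).le]
  have hg_sq : ∀ s ∈ Ioc c x, g s ^ 2 = 1 / a s := fun s hs => by
    simp only [g, inv_pow, Real.sq_sqrt (ha.pos s (hS hs)).le, one_div]
  have hfg : ∀ s ∈ Ioc c x, f s * g s = |deriv u s| := fun s hs => by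
    have := Real.sqrt_pos.mpr (ha.pos s (hS hs))
    simp only [f, g, Real.norm_eq_abs, abs_mul, abs_of_pos this]
    field_simp
  have hf2 : MemLp f 2 (volume.restrict (Ioc c x)) :=
    (hu.2.2.mono_measure (Measure.restrict_mono hS le_rfl)).norm
  have hg2 : MemLp g 2 (volume.restrict (Ioc c x)) := by
    refine (memLp_two_iff_integrable_sq ?_).mpr ?_
    · exact ((Real.continuous_sqrt.comp_continuousOn
        (ha.contDiff.continuousOn.mono (hS.trans Ioo_subset_Icc_self))).inv₀ fun s hs =>
          (Real.sqrt_pos.mpr (ha.pos s (hS hs))).ne').aestronglyMeasurable measurableSet_Ioc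
    · exact ((intervalIntegrable_iff_integrableOn_Ioc_of_le hcx).mp
        (ha.intervalIntegrable_inv hc hx)).congr_fun (fun s hs => (hg_sq s hs).symm)
        measurableSet_Ioc
  have hf_int : ∫ s in Ioc c x, f s ^ 2 ≤ H1aSq a u :=
    calc ∫ s in Ioc c x, f s ^ 2 ≤ ∫ s in Omg, f s ^ 2 :=
          setIntegral_mono_set hu.2.2.norm.integrable_sq (ae_of_all _ fun _ => sq_nonneg _)
            hS.eventuallyLE
      _ = ∫ s, a s * deriv u s ^ 2 ∂muO := setIntegral_congr_fun measurableSet_Ioo hf_sq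
      _ ≤ H1aSq a u := le_add_of_nonneg_left (integral_nonneg fun _ => sq_nonneg _)
  have hg_int : ∫ s in Ioc c x, g s ^ 2 = invPrimitive a x - invPrimitive a c := by
    rw [ha.invPrimitive_sub hc hx, intervalIntegral.integral_of_le hcx]
    exact setIntegral_congr_fun measurableSet_Ioc hg_sq
  calc |u x - u c| = |∫ s in c..x, deriv u s| := by rw [(hu.2.1 c hc x hx).2, add_sub_cancel_left]
    _ ≤ ∫ s in Ioc c x, |deriv u s| := by
        rw [intervalIntegral.integral_of_le hcx]; exact abs_integral_le_integral_abs
    _ = ∫ s in Ioc c x, f s * g s := (setIntegral_congr_fun measurableSet_Ioc hfg).symm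
    _ ≤ √(∫ s in Ioc c x, f s ^ 2) * √(∫ s in Ioc c x, g s ^ 2) :=
        integral_mul_le_sqrt_mul_sqrt (ae_of_all _ fun _ => norm_nonneg _)
          (ae_of_all _ fun _ => inv_nonneg.mpr (Real.sqrt_nonneg _)) hf2 hg2
    _ ≤ H1aNorm a u * √(invPrimitive a x - invPrimitive a c) := by
        rw [hg_int]; gcongr; exact Real.sqrt_le_sqrt hf_int

theorem abs_sub_le (ha : DiffCoeff a) (hu : MemH1a a u) (hc : c ∈ Omg) (hx : x ∈ Omg) :
    |u x - u c| ≤ H1aNorm a u * √|invPrimitive a x - invPrimitive a c| := by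
  rcases le_total c x with hcx | hxc
  · rw [abs_of_nonneg (sub_nonneg.mpr (ha.monotoneOn_invPrimitive hc hx hcx))]
    exact hu.abs_sub_le_of_le ha hc hx hcx
  · rw [abs_sub_comm, abs_sub_comm (invPrimitive a x),
      abs_of_nonneg (sub_nonneg.mpr (ha.monotoneOn_invPrimitive hx hc hxc))]
    exact hu.abs_sub_le_of_le ha hx hc hxc

theorem exists_sq_le_L2sq (hu : MemH1a a u) :
    ∃ x₀ ∈ Ioo (-(1 / 2) : ℝ) (1 / 2), u x₀ ^ 2 ≤ L2sq u := by
  have hsub : Ioo (-(1 / 2) : ℝ) (1 / 2) ⊆ Omg := Ioo_subset_Ioo (by norm_num) (by norm_num)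
  have hvol : volume (Ioo (-(1 / 2) : ℝ) (1 / 2)) = 1 := by norm_num [Real.volume_Ioo]
  have hint : IntegrableOn (fun x => u x ^ 2) Omg := hu.1.integrable_sq
  obtain ⟨x₀, hx₀, hle⟩ := exists_le_setAverage (μ := volume) (by simp) (by simp)
    (hint.mono_set hsub)
  refine ⟨x₀, hx₀, hle.trans ?_⟩
  rw [setAverage_eq, measureReal_def, hvol, ENNReal.toReal_one, inv_one, one_smul]
  exact setIntegral_mono_set hint (ae_of_all _ fun _ => sq_nonneg _) hsub.eventuallyLE

end MemH1a

def H1aWeight (a : ℝ → ℝ) (x : ℝ) : ℝ :=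
  2 * (1 + |invPrimitive a (-(1 / 2))| + |invPrimitive a (1 / 2)| + |invPrimitive a x|)

theorem DiffCoeff.integrable_H1aWeight (ha : DiffCoeff a) : Integrable (H1aWeight a) muO :=
  ((integrable_const _).add (show Integrable (invPrimitive a) muO from ha.int_inv).abs).const_mul 2

theorem MemH1a.sq_le_mul_H1aWeight (ha : DiffCoeff a) (hu : MemH1a a u) {C : ℝ}
    (hC : H1aNorm a u ≤ C) (hx : x ∈ Omg) : u x ^ 2 ≤ C ^ 2 * H1aWeight a x := by
  obtain ⟨x₀, hx₀, hux₀⟩ := hu.exists_sq_le_L2sq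
  set H := invPrimitive a
  have hH : |H x - H x₀| ≤ |H (-(1 / 2))| + |H (1 / 2)| + |H x| := by
    linarith [abs_sub (H x) (H x₀), ha.abs_invPrimitive_le (Ioo_subset_Icc_self hx₀)]
  have hdiff : (u x - u x₀) ^ 2 ≤ H1aSq a u * |H x - H x₀| := by
    have := pow_le_pow_left₀ (abs_nonneg _)
      (hu.abs_sub_le ha (Ioo_subset_Ioo (by norm_num) (by norm_num) hx₀) hx) 2
    rwa [sq_abs, mul_pow, Real.sq_sqrt (abs_nonneg _), H1aNorm,
      Real.sq_sqrt (ha.H1aSq_nonneg u)] at this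
  have hsq : H1aSq a u ≤ C ^ 2 := by
    rw [← Real.sq_sqrt (ha.H1aSq_nonneg u)]
    exact pow_le_pow_left₀ (Real.sqrt_nonneg _) hC 2
  calc u x ^ 2 ≤ 2 * u x₀ ^ 2 + 2 * (u x - u x₀) ^ 2 := by nlinarith [sq_nonneg (u x - 2 * u x₀)]
    _ ≤ H1aSq a u * (2 + 2 * |H x - H x₀|) := by
        nlinarith [ha.L2sq_le_H1aSq u]
    _ ≤ H1aSq a u * H1aWeight a x := by
        gcongr
        · exact ha.H1aSq_nonneg u
        · unfold H1aWeight; linarith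
    _ ≤ C ^ 2 * H1aWeight a x := by
        gcongr
        unfold H1aWeight; positivity

theorem equicontinuousAt_of_H1aNorm_le (ha : DiffCoeff a) {u : ℕ → ℝ → ℝ}
    (hu : ∀ n, MemH1a a (u n)) {C : ℝ} (hC : ∀ n, H1aNorm a (u n) ≤ C) (hx : x ∈ Omg) :
    EquicontinuousAt u x := by
  refine Metric.equicontinuousAt_of_continuity_modulus
    (fun y => C * √|invPrimitive a x - invPrimitive a y|) ?_ u ?_
  · simpa using ((tendsto_const_nhds.sub (ha.continuousAt_invPrimitive hx)).abs.sqrt.const_mul C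
      : Tendsto _ _ (𝓝 (C * √|invPrimitive a x - invPrimitive a x|)))
  · filter_upwards [isOpen_Ioo.mem_nhds hx] with y hy n
    exact ((hu n).abs_sub_le ha hy hx).trans
      (mul_le_mul_of_nonneg_right (hC n) (Real.sqrt_nonneg _))

theorem exists_strictMono_cauchySeq_of_H1aNorm_le (ha : DiffCoeff a) {u : ℕ → ℝ → ℝ}
    (hu : ∀ n, MemH1a a (u n)) {C : ℝ} (hC : ∀ n, H1aNorm a (u n) ≤ C) :
    ∃ k : ℕ → ℕ, StrictMono k ∧ ∀ x ∈ Omg, CauchySeq fun n => u (k n) x := by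
  obtain ⟨_, k, hk, hlim⟩ := exists_strictMono_tendsto_of_abs_le
    (fun n (q : {q : ℚ // (q : ℝ) ∈ Omg}) => u n q) (fun q => √(C ^ 2 * H1aWeight a q))
    fun n q => Real.abs_le_sqrt ((hu n).sq_le_mul_H1aWeight ha (hC n) q.2)
  refine ⟨k, hk, fun x hx => ?_⟩
  refine ((equicontinuousAt_of_H1aNorm_le ha hu hC hx).comp k).cauchySeq_of_mem_closure
    (s := Omg ∩ range ((↑) : ℚ → ℝ)) ?_
    (Rat.denseRange_cast.open_subset_closure_inter isOpen_Ioo hx)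
  rintro _ ⟨hq, q, rfl⟩
  exact (hlim ⟨q, hq⟩).cauchySeq

/-- Lemma 2.1: under the assumptions on the degenerate diffusion
coefficient `a`, the embedding `H¹_a(Ω) ↪ L²(Ω)` is compact (every bounded sequence
in `H¹_a(Ω)` has a subsequence converging in `L²(Ω)`); in particular there is a
constant `C > 0` with `‖y‖_{L²(Ω)} ≤ C ‖y‖_{H¹_a(Ω)}` for every `y ∈ H¹_a(Ω)`. -/
theorem compact_embedding_H1a_L2 (a : ℝ → ℝ) (ha : DiffCoeff a) :
    (∀ u : ℕ → ℝ → ℝ, (∀ n, MemH1a a (u n)) →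
      (∃ C : ℝ, ∀ n, H1aNorm a (u n) ≤ C) →
      ∃ (g : ℝ → ℝ) (k : ℕ → ℕ), StrictMono k ∧ MemLp g 2 muO ∧
        Tendsto (fun n => L2norm (fun x => u (k n) x - g x)) atTop (nhds 0)) ∧
    (∃ C : ℝ, 0 < C ∧ ∀ y : ℝ → ℝ, MemH1a a y → L2norm y ≤ C * H1aNorm a y) := by
  refine ⟨fun u hu ⟨C, hC⟩ => ?_, 1, one_pos,
    fun y _ => by simpa using ha.L2norm_le_H1aNorm y⟩
  obtain ⟨k, hk, hcauchy⟩ := exists_strictMono_cauchySeq_of_H1aNorm_le ha hu hC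
  have hΩ : ∀ᵐ x ∂muO, x ∈ Omg := ae_restrict_mem measurableSet_Ioo
  obtain ⟨hg, hconv⟩ := memLp_two_and_tendsto_integral_sq_sub_of_dominated
    (g := fun x => limUnder atTop fun n => u (k n) x)
    (fun n => (hu (k n)).1.1) (ha.integrable_H1aWeight.const_mul (C ^ 2))
    (fun n => hΩ.mono fun x hx => (hu (k n)).sq_le_mul_H1aWeight ha (hC (k n)) hx)
    (hΩ.mono fun x hx => (hcauchy x hx).tendsto_limUnder)
  refine ⟨_, k, hk, hg, ?_⟩
  simpa [L2norm, L2sq] using hconv.sqrt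

end DegenerateControl
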